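/- arXiv:2112.08065 — 2 statements merged into one kernel-verified Lean document; each statement's English description precedes it below -/
import Mathlib

section
/- Let F_T(u,v) ∈ ℤ[μ1, μ2, μ3, μ4, μ6][[u,v]] be the Tate formal group. Then the partial derivative of F_T(u,v) with respect to v evaluated at v = 0 equals 1 − μ1·u − μ2·u² − 2μ3·s(u) − 2μ4·u·s(u) − 3μ6·s(u)², where s(u) is the Tate coordinate series. -/
noncomputable section

/-- The polynomial ring `ℤ[μ₁, μ₂, μ₃, μ₄, μ₆]`. -/
abbrev Rmu : Type := MvPolynomial (Fin 5) ℤ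

def mu1 : Rmu := MvPolynomial.X 0
def mu2 : Rmu := MvPolynomial.X 1
def mu3 : Rmu := MvPolynomial.X 2
def mu4 : Rmu := MvPolynomial.X 3
def mu6 : Rmu := MvPolynomial.X 4

/-- The Tate equation `s = u³ + μ₁us + μ₂u²s + μ₃s² + μ₄us² + μ₆s³`. -/
def tateEq (s : PowerSeries Rmu) : Prop :=
  s = PowerSeries.X ^ 3 + PowerSeries.C (R := Rmu) mu1 * PowerSeries.X * s
    + PowerSeries.C (R := Rmu) mu2 * PowerSeries.X ^ 2 * s + PowerSeries.C (R := Rmu) mu3 * s ^ 2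
    + PowerSeries.C (R := Rmu) mu4 * PowerSeries.X * s ^ 2 + PowerSeries.C (R := Rmu) mu6 * s ^ 3

/-- A one-variable power series `f`, viewed as a multivariable power series
in the single variable `i`:  `f(x_i)`. -/
def onVar {R : Type*} [CommRing R] {σ : Type*} [DecidableEq σ] (i : σ) (f : PowerSeries R) :
    MvPowerSeries σ R :=
  fun d => if d = Finsupp.single i (d i) then PowerSeries.coeff (R := R) (d i) f else 0

/-- The exponent vector of the monomial `u^i v^j`. -/
def ee (i j : ℕ) : Fin 2 →₀ ℕ := Finsupp.single 0 i + Finsupp.single 1 j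

/-- `W = 1 − μ₃k − μ₆k²`. -/
def Wk (k : MvPowerSeries (Fin 2) Rmu) : MvPowerSeries (Fin 2) Rmu :=
  1 - MvPowerSeries.C (σ := Fin 2) (R := Rmu) mu3 * k - MvPowerSeries.C (σ := Fin 2) (R := Rmu) mu6 * k ^ 2

/-- `Q(m) = 1 + μ₂m + μ₄m² + μ₆m³`. -/
def Qm (m : MvPowerSeries (Fin 2) Rmu) : MvPowerSeries (Fin 2) Rmu :=
  1 + MvPowerSeries.C (σ := Fin 2) (R := Rmu) mu2 * m + MvPowerSeries.C (σ := Fin 2) (R := Rmu) mu4 * m ^ 2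
    + MvPowerSeries.C (σ := Fin 2) (R := Rmu) mu6 * m ^ 3

/-- `P = μ₁ + μ₃m + (μ₄ + 2μ₆m)k`. -/
def Pmk (m k : MvPowerSeries (Fin 2) Rmu) : MvPowerSeries (Fin 2) Rmu :=
  MvPowerSeries.C (σ := Fin 2) (R := Rmu) mu1 + MvPowerSeries.C (σ := Fin 2) (R := Rmu) mu3 * m
    + (MvPowerSeries.C (σ := Fin 2) (R := Rmu) mu4 + 2 * MvPowerSeries.C (σ := Fin 2) (R := Rmu) mu6 * m) * k

/-!
Reduce modulo `v²`, i.e. map `ℤ[μ][[u, v]]` to the dual numbers over `ℤ[μ][[u]]`, writing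
`f ≡ f₀ + f₁ ε`. Since `s` has no constant or linear term, the defining relations give
`u m₀ = s`, `k₀ = 0`, `u k₁ = -s`, then `n₀ = m₀` and `n₁ = m₁ + u Q(m₀)`. Comparing the two
components of `F_T Q(n) W² = ((u + v) W - u v P) Q(m)` and cancelling the unit `Q(m₀)` yields
`F₀ = u` and `F₁ = 1 - μ₁ u + μ₃ u (k₁ - m₀) - u² Q'(m₀)`, which is the claimed series once
`u m₀ = s = -u k₁` is substituted.
-/
section TwoVariables

open DualNumber TrivSqZeroExt Finset.HasAntidiagonal

variable {R : Type*} [CommRing R]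

@[simp]
lemma ee_apply_zero (i j : ℕ) : ee i j 0 = i := by
  simp [ee]

@[simp]
lemma ee_apply_one (i j : ℕ) : ee i j 1 = j := by
  simp [ee]

lemma ee_apply_self (d : Fin 2 →₀ ℕ) : ee (d 0) (d 1) = d := by
  ext x
  fin_cases x <;> simp

@[simp]
lemma ee_inj {i j a b : ℕ} : ee i j = ee a b ↔ i = a ∧ j = b := by
  refine ⟨fun h => ⟨by simpa using DFunLike.congr_fun h 0, by simpa using DFunLike.congr_fun h 1⟩,
    ?_⟩
  rintro ⟨rfl, rfl⟩
  rfl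

lemma ee_add (i j a b : ℕ) : ee i a + ee j b = ee (i + j) (a + b) := by
  simp only [ee, Finsupp.single_add]
  abel

@[simp]
lemma ee_eq_zero_iff {i j : ℕ} : ee i j = 0 ↔ i = 0 ∧ j = 0 := by
  rw [← ee_inj, ee, ee]
  simp

lemma single_zero_eq_ee (i : ℕ) : Finsupp.single (0 : Fin 2) i = ee i 0 := by
  simp [ee]

lemma single_one_eq_ee (j : ℕ) : Finsupp.single (1 : Fin 2) j = ee 0 j := by
  simp [ee]

lemma coeff_ee_mul (f g : MvPowerSeries (Fin 2) R) (i j : ℕ) :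
    MvPowerSeries.coeff (ee i j) (f * g) =
      ∑ p ∈ antidiagonal i, ∑ q ∈ antidiagonal j,
        MvPowerSeries.coeff (ee p.1 q.1) f * MvPowerSeries.coeff (ee p.2 q.2) g := by
  rw [MvPowerSeries.coeff_mul, ← Finset.sum_product']
  refine Finset.sum_nbij' (fun p => ((p.1 0, p.2 0), (p.1 1, p.2 1)))
    (fun x => (ee x.1.1 x.2.1, ee x.1.2 x.2.2)) ?_ ?_ ?_ ?_ ?_
  · intro p hp
    rw [mem_antidiagonal] at hp
    simp [← Finsupp.add_apply, hp]
  · intro x hx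
    simp only [Finset.mem_product, mem_antidiagonal] at hx
    rw [mem_antidiagonal, ee_add, hx.1, hx.2]
  · intro p _
    simp [ee_apply_self]
  · intro x _
    simp
  · intro p _
    rw [ee_apply_self, ee_apply_self]

def vCoeff (j : ℕ) (f : MvPowerSeries (Fin 2) R) : PowerSeries R :=
  PowerSeries.mk fun i => MvPowerSeries.coeff (ee i j) f

@[simp]
lemma coeff_vCoeff (i j : ℕ) (f : MvPowerSeries (Fin 2) R) :
    PowerSeries.coeff i (vCoeff j f) = MvPowerSeries.coeff (ee i j) f :=
  PowerSeries.coeff_mk _ _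

lemma vCoeff_zero_mul (f g : MvPowerSeries (Fin 2) R) :
    vCoeff 0 (f * g) = vCoeff 0 f * vCoeff 0 g := by
  ext i
  simp [coeff_ee_mul, PowerSeries.coeff_mul]

lemma vCoeff_one_mul (f g : MvPowerSeries (Fin 2) R) :
    vCoeff 1 (f * g) = vCoeff 0 f * vCoeff 1 g + vCoeff 1 f * vCoeff 0 g := by
  ext i
  simp [coeff_ee_mul, PowerSeries.coeff_mul, Finset.Nat.antidiagonal_succ, Finset.sum_add_distrib]

/-- Reduction modulo `v²`: `f ↦ f(u, 0) + ε ∂f/∂v(u, 0)`. -/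
def modVSq : MvPowerSeries (Fin 2) R →+* DualNumber (PowerSeries R) where
  toFun f := inl (vCoeff 0 f) + inr (vCoeff 1 f)
  map_one' := by
    ext i <;> simp [MvPowerSeries.coeff_one, PowerSeries.coeff_one]
  map_mul' f g := by
    ext : 1 <;> simp [vCoeff_zero_mul, vCoeff_one_mul]
  map_zero' := by
    ext <;> simp
  map_add' f g := by
    ext <;> simp

@[simp]
lemma fst_modVSq (f : MvPowerSeries (Fin 2) R) : (modVSq f).fst = vCoeff 0 f := by
  simp [modVSq]

@[simp]
lemma snd_modVSq (f : MvPowerSeries (Fin 2) R) : (modVSq f).snd = vCoeff 1 f := by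
  simp [modVSq]

lemma modVSq_C (a : R) : modVSq (MvPowerSeries.C a) = inl (PowerSeries.C a) := by
  ext i <;> simp [MvPowerSeries.coeff_C, PowerSeries.coeff_C]

lemma modVSq_X_zero : modVSq (MvPowerSeries.X 0 : MvPowerSeries (Fin 2) R) = inl PowerSeries.X := by
  ext i <;> simp [MvPowerSeries.coeff_X, PowerSeries.coeff_X, single_zero_eq_ee]

lemma modVSq_X_one : modVSq (MvPowerSeries.X 1 : MvPowerSeries (Fin 2) R) = ε := by
  ext i <;> simp [MvPowerSeries.coeff_X, PowerSeries.coeff_one, single_one_eq_ee]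

lemma modVSq_onVar_zero (f : PowerSeries R) : modVSq (onVar 0 f) = inl f := by
  ext i <;> simp [onVar, MvPowerSeries.coeff_apply, single_zero_eq_ee]

lemma modVSq_onVar_one (f : PowerSeries R) :
    modVSq (onVar 1 f) =
      inl (PowerSeries.C (PowerSeries.coeff 0 f)) +
        inr (PowerSeries.C (PowerSeries.coeff 1 f)) := by
  ext i <;> simp [onVar, MvPowerSeries.coeff_apply, single_one_eq_ee, PowerSeries.coeff_C]

end TwoVariables

section DividedDifferences

variable {R : Type*} [CommRing R] {s : PowerSeries R} {m k : MvPowerSeries (Fin 2) R}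

lemma X_mul_vCoeff_zero_of_divDiff (hs₀ : PowerSeries.constantCoeff s = 0)
    (hm : (MvPowerSeries.X 0 - MvPowerSeries.X 1) * m = onVar 0 s - onVar 1 s) :
    PowerSeries.X * vCoeff 0 m = s := by
  have h := congrArg (fun f => (modVSq f).fst) hm
  simpa [modVSq_X_zero, modVSq_X_one, modVSq_onVar_zero, modVSq_onVar_one, hs₀] using h

lemma vCoeff_of_crossDivDiff (hs₀ : PowerSeries.constantCoeff s = 0)
    (hs₁ : PowerSeries.coeff 1 s = 0)
    (hk : (MvPowerSeries.X 0 - MvPowerSeries.X 1) * k =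
      MvPowerSeries.X 0 * onVar 1 s - MvPowerSeries.X 1 * onVar 0 s) :
    vCoeff 0 k = 0 ∧ PowerSeries.X * vCoeff 1 k = -s := by
  have h := congrArg modVSq hk
  simp [TrivSqZeroExt.ext_iff, modVSq_X_zero, modVSq_X_one, modVSq_onVar_zero, modVSq_onVar_one,
    hs₀, hs₁] at h
  obtain ⟨h₀, h₁⟩ := h
  have hk₀ : vCoeff 0 k = 0 := PowerSeries.X_mul_cancel (by rw [h₀, mul_zero])
  exact ⟨hk₀, by simpa [hk₀] using h₁⟩

end DividedDifferences

section TateJets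

open PowerSeries

variable {m k n FT : MvPowerSeries (Fin 2) Rmu}

lemma vCoeff_of_tateN (hk₀ : vCoeff 0 k = 0)
    (hn : n * Wk k = m * Wk k + MvPowerSeries.X 0 * MvPowerSeries.X 1 * Qm m) :
    vCoeff 0 n = vCoeff 0 m ∧
      vCoeff 1 n = vCoeff 1 m + X * (1 + C mu2 * vCoeff 0 m + C mu4 * vCoeff 0 m ^ 2
        + C mu6 * vCoeff 0 m ^ 3) := by
  have h := congrArg modVSq hn
  simp [TrivSqZeroExt.ext_iff, Wk, Qm, modVSq_X_zero, modVSq_X_one, modVSq_C, hk₀] at h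
  obtain ⟨h₀, h₁⟩ := h
  exact ⟨h₀, by rw [h₀] at h₁; linear_combination h₁⟩

lemma vCoeff_of_tateFT (hk₀ : vCoeff 0 k = 0) (hm₀ : constantCoeff (vCoeff 0 m) = 0)
    (hn : n * Wk k = m * Wk k + MvPowerSeries.X 0 * MvPowerSeries.X 1 * Qm m)
    (hFT : FT * (Qm n * Wk k ^ 2) =
      ((MvPowerSeries.X 0 + MvPowerSeries.X 1) * Wk k -
        MvPowerSeries.X 0 * MvPowerSeries.X 1 * Pmk m k) * Qm m) :
    vCoeff 1 FT = 1 - C mu1 * X + C mu3 * X * vCoeff 1 k - C mu3 * X * vCoeff 0 m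
      - X ^ 2 * (C mu2 + 2 * C mu4 * vCoeff 0 m + 3 * C mu6 * vCoeff 0 m ^ 2) := by
  obtain ⟨hn₀, hn₁⟩ := vCoeff_of_tateN hk₀ hn
  have h := congrArg modVSq hFT
  simp [TrivSqZeroExt.ext_iff, Wk, Qm, Pmk, modVSq_X_zero, modVSq_X_one, modVSq_C, hk₀, hn₀, hn₁]
    at h
  set q := 1 + C mu2 * vCoeff 0 m + C mu4 * vCoeff 0 m ^ 2 + C mu6 * vCoeff 0 m ^ 3
  have hq : q ≠ 0 := fun h => by simpa [q, hm₀] using congrArg constantCoeff h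
  obtain ⟨hF₀ | hq₀, hF₁⟩ := h
  · apply mul_right_cancel₀ hq
    rw [hF₀] at hF₁
    linear_combination hF₁
  · exact (hq hq₀).elim

end TateJets

lemma tateEq.coeff_one_eq_zero {s : PowerSeries Rmu} (hs₀ : PowerSeries.constantCoeff s = 0)
    (hs : tateEq s) : PowerSeries.coeff 1 s = 0 := by
  rw [hs]
  simp [PowerSeries.coeff_mul, Finset.Nat.antidiagonal_succ, pow_succ, hs₀]

open PowerSeries in
/-- `∂F_T/∂v |_{v=0} = 1 − μ₁u − μ₂u² − 2μ₃s(u) − 2μ₄us(u) − 3μ₆s(u)²`; the left-hand side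
is the power series in `u` whose `i`-th coefficient is the coefficient of `u^i v` in `F_T`. -/
theorem statement16
    (s : PowerSeries Rmu) (hs0 : PowerSeries.constantCoeff (R := Rmu) s = 0) (hs : tateEq s)
    (m k n FT : MvPowerSeries (Fin 2) Rmu)
    -- `(u − v)·m = s(u) − s(v)`:
    (hm : (MvPowerSeries.X 0 - MvPowerSeries.X 1) * m = onVar 0 s - onVar 1 s)
    -- `(u − v)·k = u·s(v) − v·s(u)`:
    (hk : (MvPowerSeries.X 0 - MvPowerSeries.X 1) * k =
      MvPowerSeries.X 0 * onVar 1 s - MvPowerSeries.X 1 * onVar 0 s)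
    -- `n = m + uv·Q(m)/W`, i.e. `n·W = m·W + uv·Q(m)`:
    (hn : n * Wk k = m * Wk k + MvPowerSeries.X 0 * MvPowerSeries.X 1 * Qm m)
    -- `F_T = (u + v − uv·P/W)·Q(m)/(Q(n)·W)`, i.e. `F_T·Q(n)·W² = ((u+v)·W − uv·P)·Q(m)`:
    (hFT : FT * (Qm n * Wk k ^ 2) =
      ((MvPowerSeries.X 0 + MvPowerSeries.X 1) * Wk k -
        MvPowerSeries.X 0 * MvPowerSeries.X 1 * Pmk m k) * Qm m) :
    ∀ i : ℕ, MvPowerSeries.coeff (R := Rmu) (ee i 1) FT =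
      PowerSeries.coeff (R := Rmu) i
        (1 - PowerSeries.C (R := Rmu) mu1 * PowerSeries.X - PowerSeries.C (R := Rmu) mu2 * PowerSeries.X ^ 2
          - 2 * PowerSeries.C (R := Rmu) mu3 * s - 2 * PowerSeries.C (R := Rmu) mu4 * PowerSeries.X * s
          - 3 * PowerSeries.C (R := Rmu) mu6 * s ^ 2) := by
  intro i
  have hs₁ : coeff 1 s = 0 := hs.coeff_one_eq_zero hs0
  have hXm₀ : X * vCoeff 0 m = s := X_mul_vCoeff_zero_of_divDiff hs0 hm
  obtain ⟨hk₀, hXk₁⟩ := vCoeff_of_crossDivDiff hs0 hs₁ hk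
  have hm₀ : constantCoeff (vCoeff 0 m) = 0 := by
    rw [← coeff_zero_eq_constantCoeff_apply, ← coeff_succ_X_mul, hXm₀, hs₁]
  rw [← coeff_vCoeff, vCoeff_of_tateFT hk₀ hm₀ hn hFT]
  refine congrArg (coeff i) ?_
  linear_combination
    C mu3 * hXk₁ - (C mu3 + 2 * C mu4 * X + 3 * C mu6 * (X * vCoeff 0 m + s)) * hXm₀
end
end

section
/- Consider the specialization of the Tate formal group at μ1 = 0, μ3 = 0, μ6 = 0, i.e. the image of F_T(u,v) under the ring homomorphism ℤ[μ1,μ2,μ3,μ4,μ6] → ℤ[μ2,μ4] sending μ1, μ3, μ6 to 0 and fixing μ2, μ4. Then there exists a unique power series B(u) ∈ ℤ[μ2,μ4][[u]] with B(0) = 1 and B(u)² = (1 − μ2u²)² − 4μ4u⁴; this B satisfies B'(0) = 0, and the specialized Tate formal group equals (u² − v²)/(uB(v) − vB(u)). -/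
/-!
After the specialization `μ₁ = μ₃ = μ₆ = 0` the Tate equation reads
`μ₄·u·s² − (1 − μ₂u²)·s + u³ = 0`, so completing the square shows that
`B = 1 − μ₂u² − 2μ₄·u·s(u)` squares to `(1 − μ₂u²)² − 4μ₄u⁴`; over a domain of characteristic
`≠ 2` it is the only square root with constant term `1`.

The series `m` and `k` are the slope and intercept of the chord through `(u, s(u))` and
`(v, s(v))`. Hence `u·B(v) − v·B(u) = (u − v)(1 + μ₂uv + 2μ₄uv·m)`, and eliminating `n` and `k`
with the chord relations turns the defining equation of `F_T` into
`F_T·(1 + μ₂uv + 2μ₄uv·m) = u + v`.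
-/

noncomputable section

/-- The specialization homomorphism `μ₁, μ₃, μ₆ ↦ 0`, `μ₂ ↦ μ₂`, `μ₄ ↦ μ₄`. -/
def spec2 : Rmu →+* MvPolynomial (Fin 2) ℤ :=
  (MvPolynomial.aeval ![0, MvPolynomial.X 0, 0, MvPolynomial.X 1, 0]).toRingHom

section OnVar

variable {R : Type*} [CommRing R]

open MvPowerSeries in
theorem onVar_eq_rename {σ : Type*} [DecidableEq σ] (i : σ) (f : PowerSeries R) :
    onVar i f = rename (fun _ : Unit ↦ i) f := by
  ext d
  by_cases hd : d = Finsupp.single i (d i)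
  · have hemb : d = Finsupp.embDomain ⟨fun _ : Unit ↦ i, fun _ _ _ ↦ rfl⟩
        (Finsupp.single () (d i)) := by
      rw [Finsupp.embDomain_single]; exact hd
    conv_rhs => rw [hemb]
    exact (if_pos hd).trans (coeff_embDomain_rename _ f _).symm
  · rw [coeff_rename_eq_zero]
    · exact if_neg hd
    · rintro ⟨x, rfl⟩
      obtain ⟨n, rfl⟩ : ∃ n, x = Finsupp.single () n := ⟨_, Finsupp.unique_single x⟩
      simp [Finsupp.mapDomain_single] at hd

theorem PowerSeries.rename_X {σ : Type*} (f : Unit → σ) [Filter.TendstoCofinite f] :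
    MvPowerSeries.rename f (X : PowerSeries R) = MvPowerSeries.X (f ()) :=
  MvPowerSeries.rename_X f ()

theorem PowerSeries.rename_C {σ : Type*} (f : Unit → σ) [Filter.TendstoCofinite f] (r : R) :
    MvPowerSeries.rename f (C r) = MvPowerSeries.C r :=
  MvPowerSeries.rename_C f r

theorem onVar_map {S σ : Type*} [CommRing S] [DecidableEq σ] (φ : R →+* S) (i : σ)
    (f : PowerSeries R) : onVar i (PowerSeries.map φ f) = MvPowerSeries.map φ (onVar i f) := by
  simp only [onVar_eq_rename]
  exact MvPowerSeries.rename_map _ φ f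

end OnVar

section ChordAlgebra

variable {S : Type*} [CommRing S] {U V M K A B N F a b : S}

theorem chord_left [NoZeroDivisors S] (hUV : U - V ≠ 0) (hm : (U - V) * M = A - B)
    (hk : (U - V) * K = U * B - V * A) : A = U * M + K :=
  (mul_left_cancel₀ hUV (by linear_combination U * hm + hk)).symm

theorem chord_right [NoZeroDivisors S] (hUV : U - V ≠ 0) (hm : (U - V) * M = A - B)
    (hk : (U - V) * K = U * B - V * A) : B = V * M + K :=
  (mul_left_cancel₀ hUV (by linear_combination V * hm + hk)).symm

theorem chord_intercept [NoZeroDivisors S] (hUV : U - V ≠ 0) (hm : (U - V) * M = A - B)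
    (hk : (U - V) * K = U * B - V * A)
    (hA : A = U ^ 3 + a * U ^ 2 * A + b * U * A ^ 2)
    (hB : B = V ^ 3 + a * V ^ 2 * B + b * V * B ^ 2) :
    K = -(U * V) * (U + V + a * ((U + V) * M + K) + b * ((U + V) * M ^ 2 + 2 * M * K)) := by
  rw [chord_left hUV hm hk] at hA
  rw [chord_right hUV hm hk] at hB
  refine eq_of_sub_eq_zero ((mul_eq_zero.mp ?_).resolve_left hUV)
  linear_combination U * hB - V * hA

theorem chord_slope [NoZeroDivisors S] (hUV : U - V ≠ 0) (hm : (U - V) * M = A - B)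
    (hk : (U - V) * K = U * B - V * A)
    (hA : A = U ^ 3 + a * U ^ 2 * A + b * U * A ^ 2)
    (hB : B = V ^ 3 + a * V ^ 2 * B + b * V * B ^ 2) :
    M = (U ^ 2 + U * V + V ^ 2) * (1 + a * M + b * M ^ 2) + (U + V) * (a * K + 2 * b * M * K)
      + b * K ^ 2 := by
  rw [chord_left hUV hm hk] at hA
  rw [chord_right hUV hm hk] at hB
  refine eq_of_sub_eq_zero ((mul_eq_zero.mp ?_).resolve_left hUV)
  linear_combination hA - hB

theorem mul_sqrt_sub_mul_sqrt (hm : (U - V) * M = A - B) :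
    U * (1 - a * V ^ 2 - 2 * b * V * B) - V * (1 - a * U ^ 2 - 2 * b * U * A) =
      (U - V) * (1 + a * (U * V) + 2 * b * (U * V) * M) := by
  linear_combination -(2 * b * (U * V)) * hm

theorem formalGroup_mul_eq [NoZeroDivisors S]
    (hK : K = -(U * V) * (U + V + a * ((U + V) * M + K) + b * ((U + V) * M ^ 2 + 2 * M * K)))
    (hN : N = M + U * V * (1 + a * M + b * M ^ 2))
    (hF : F * (1 + a * N + b * N ^ 2) = (U + V - U * V * (b * K)) * (1 + a * M + b * M ^ 2))
    (hQN : 1 + a * N + b * N ^ 2 ≠ 0) :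
    F * (1 + a * (U * V) + 2 * b * (U * V) * M) = U + V := by
  refine mul_right_cancel₀ hQN ?_
  linear_combination (1 + a * (U * V) + 2 * b * (U * V) * M) * hF
    - b * (U * V) * (1 + a * M + b * M ^ 2) * hK
    - (U + V) * (a + b * (N + M + U * V * (1 + a * M + b * M ^ 2))) * hN

end ChordAlgebra

section LevelTwoFormalGroup

open MvPowerSeries

variable {σ R : Type*} [CommRing R] [NoZeroDivisors R] [Nontrivial R]

theorem levelTwo_formalGroup {i j : σ} (hij : i ≠ j) {a b A B M K N F : MvPowerSeries σ R}
    (hA : A = X i ^ 3 + a * X i ^ 2 * A + b * X i * A ^ 2)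
    (hB : B = X j ^ 3 + a * X j ^ 2 * B + b * X j * B ^ 2)
    (hm : (X i - X j) * M = A - B) (hk : (X i - X j) * K = X i * B - X j * A)
    (hN : N = M + X i * X j * (1 + a * M + b * M ^ 2))
    (hF : F * (1 + a * N + b * N ^ 2) =
      (X i + X j - X i * X j * (b * K)) * (1 + a * M + b * M ^ 2)) :
    F * (X i * (1 - a * X j ^ 2 - 2 * b * X j * B) - X j * (1 - a * X i ^ 2 - 2 * b * X i * A)) =
      X i ^ 2 - X j ^ 2 := by
  have hUV : (X i - X j : MvPowerSeries σ R) ≠ 0 := sub_ne_zero.mpr (X_inj.not.mpr hij)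
  have hK := chord_intercept hUV hm hk hA hB
  have hK0 : constantCoeff K = 0 := by rw [hK]; simp
  have hM0 : constantCoeff M = 0 := by rw [chord_slope hUV hm hk hA hB]; simp [hK0]
  have hQN : 1 + a * N + b * N ^ 2 ≠ 0 := fun h ↦ by
    simpa [hN, hM0] using congrArg constantCoeff h
  rw [mul_sqrt_sub_mul_sqrt hm, mul_left_comm, formalGroup_mul_eq hK hN hF hQN]
  ring

end LevelTwoFormalGroup

section LevelTwoSqrt

open PowerSeries

variable {R : Type*} [CommRing R]

def levelTwoSqrt (a b : R) (s : PowerSeries R) : PowerSeries R :=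
  1 - C a * X ^ 2 - 2 * C b * X * s

theorem levelTwoSqrt_sq {a b : R} {s : PowerSeries R}
    (hs : s = X ^ 3 + C a * X ^ 2 * s + C b * X * s ^ 2) :
    levelTwoSqrt a b s ^ 2 = (1 - C a * X ^ 2) ^ 2 - 4 * C b * X ^ 4 := by
  unfold levelTwoSqrt
  linear_combination -(4 * C b * X) * hs

theorem constantCoeff_levelTwoSqrt (a b : R) (s : PowerSeries R) :
    constantCoeff (levelTwoSqrt a b s) = 1 := by
  simp [levelTwoSqrt]

theorem coeff_one_levelTwoSqrt (a b : R) {s : PowerSeries R} (hs0 : constantCoeff s = 0) :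
    coeff 1 (levelTwoSqrt a b s) = 0 := by
  rw [levelTwoSqrt, show (2 : PowerSeries R) * C b * X * s = X * (C (2 * b) * s) by
    rw [map_mul, map_ofNat]; ring]
  simp [coeff_one, coeff_X_pow, hs0]

theorem PowerSeries.eq_of_sq_eq_sq_of_constantCoeff_eq_one [NoZeroDivisors R] [NeZero (2 : R)]
    {f g : PowerSeries R} (hf : constantCoeff f = 1) (hg : constantCoeff g = 1)
    (h : f ^ 2 = g ^ 2) : f = g := by
  refine (sq_eq_sq_iff_eq_or_eq_neg.mp h).resolve_right fun hfg ↦ two_ne_zero (α := R) ?_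
  have := congrArg constantCoeff hfg
  rw [map_neg, hf, hg] at this
  linear_combination this

theorem eq_levelTwoSqrt [NoZeroDivisors R] [NeZero (2 : R)] {a b : R} {s f : PowerSeries R}
    (hs : s = X ^ 3 + C a * X ^ 2 * s + C b * X * s ^ 2) (hf0 : constantCoeff f = 1)
    (hf : f ^ 2 = (1 - C a * X ^ 2) ^ 2 - 4 * C b * X ^ 4) : f = levelTwoSqrt a b s :=
  eq_of_sq_eq_sq_of_constantCoeff_eq_one hf0 (constantCoeff_levelTwoSqrt a b s)
    (hf.trans (levelTwoSqrt_sq hs).symm)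

theorem onVar_levelTwoSqrt {σ : Type*} [DecidableEq σ] (i : σ) (a b : R) (s : PowerSeries R) :
    onVar i (levelTwoSqrt a b s) = 1 - MvPowerSeries.C a * MvPowerSeries.X i ^ 2
      - 2 * MvPowerSeries.C b * MvPowerSeries.X i * onVar i s := by
  simp only [levelTwoSqrt, onVar_eq_rename, map_sub, map_mul, map_pow, map_one, map_ofNat,
    PowerSeries.rename_X, PowerSeries.rename_C]

end LevelTwoSqrt

section Specialization

open MvPowerSeries

@[simp] theorem spec2_mu1 : spec2 mu1 = 0 := by simp [spec2, mu1]
@[simp] theorem spec2_mu2 : spec2 mu2 = MvPolynomial.X 0 := by simp [spec2, mu2]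
@[simp] theorem spec2_mu3 : spec2 mu3 = 0 := by simp [spec2, mu3]
@[simp] theorem spec2_mu4 : spec2 mu4 = MvPolynomial.X 1 := by simp [spec2, mu4]
@[simp] theorem spec2_mu6 : spec2 mu6 = 0 := by simp [spec2, mu6]

theorem tateEq.map_spec2 {s : PowerSeries Rmu} (hs : tateEq s) :
    PowerSeries.map spec2 s = PowerSeries.X ^ 3
      + PowerSeries.C (MvPolynomial.X 0) * PowerSeries.X ^ 2 * PowerSeries.map spec2 s
      + PowerSeries.C (MvPolynomial.X 1) * PowerSeries.X * PowerSeries.map spec2 s ^ 2 := by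
  simpa using congrArg (PowerSeries.map spec2) hs

theorem map_spec2_Wk (k : MvPowerSeries (Fin 2) Rmu) : map spec2 (Wk k) = 1 := by
  simp [Wk]

theorem map_spec2_Qm (m : MvPowerSeries (Fin 2) Rmu) :
    map spec2 (Qm m) = 1 + C (MvPolynomial.X 0) * map spec2 m
      + C (MvPolynomial.X 1) * map spec2 m ^ 2 := by
  simp [Qm]

theorem map_spec2_Pmk (m k : MvPowerSeries (Fin 2) Rmu) :
    map spec2 (Pmk m k) = C (MvPolynomial.X 1) * map spec2 k := by
  simp [Pmk]

end Specialization

/-- Under the specialization `μ₁ = μ₃ = μ₆ = 0` there is a unique power series `B(u)` over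
`ℤ[μ₂, μ₄]` with `B(0) = 1` and `B(u)² = (1 − μ₂u²)² − 4μ₄u⁴`; it satisfies `B'(0) = 0` and
the specialized Tate formal group equals `(u² − v²)/(uB(v) − vB(u))`. -/
theorem statement17
    (s : PowerSeries Rmu) (hs0 : PowerSeries.constantCoeff (R := Rmu) s = 0) (hs : tateEq s)
    (m k n FT : MvPowerSeries (Fin 2) Rmu)
    -- `(u − v)·m = s(u) − s(v)`:
    (hm : (MvPowerSeries.X 0 - MvPowerSeries.X 1) * m = onVar 0 s - onVar 1 s)
    -- `(u − v)·k = u·s(v) − v·s(u)`: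
    (hk : (MvPowerSeries.X 0 - MvPowerSeries.X 1) * k =
      MvPowerSeries.X 0 * onVar 1 s - MvPowerSeries.X 1 * onVar 0 s)
    -- `n = m + uv·Q(m)/W`, i.e. `n·W = m·W + uv·Q(m)`:
    (hn : n * Wk k = m * Wk k + MvPowerSeries.X 0 * MvPowerSeries.X 1 * Qm m)
    -- `F_T = (u + v − uv·P/W)·Q(m)/(Q(n)·W)`, i.e. `F_T·Q(n)·W² = ((u+v)·W − uv·P)·Q(m)`:
    (hFT : FT * (Qm n * Wk k ^ 2) =
      ((MvPowerSeries.X 0 + MvPowerSeries.X 1) * Wk k -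
        MvPowerSeries.X 0 * MvPowerSeries.X 1 * Pmk m k) * Qm m) :
    (∃! Bs : PowerSeries (MvPolynomial (Fin 2) ℤ),
      PowerSeries.constantCoeff (R := MvPolynomial (Fin 2) ℤ) Bs = 1 ∧
      Bs ^ 2 = (1 - PowerSeries.C (R := MvPolynomial (Fin 2) ℤ) (MvPolynomial.X 0) *
          PowerSeries.X ^ 2) ^ 2 -
        4 * PowerSeries.C (R := MvPolynomial (Fin 2) ℤ) (MvPolynomial.X 1) * PowerSeries.X ^ 4) ∧
    ∀ Bs : PowerSeries (MvPolynomial (Fin 2) ℤ),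
      PowerSeries.constantCoeff (R := MvPolynomial (Fin 2) ℤ) Bs = 1 →
      Bs ^ 2 = (1 - PowerSeries.C (R := MvPolynomial (Fin 2) ℤ) (MvPolynomial.X 0) *
          PowerSeries.X ^ 2) ^ 2 -
        4 * PowerSeries.C (R := MvPolynomial (Fin 2) ℤ) (MvPolynomial.X 1) * PowerSeries.X ^ 4 →
      -- `B'(0) = 0`:
      PowerSeries.coeff (R := MvPolynomial (Fin 2) ℤ) 1 Bs = 0 ∧
      -- the specialized Tate formal group is `(u² − v²)/(uB(v) − vB(u))`:
      MvPowerSeries.map (σ := Fin 2) spec2 FT *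
          (MvPowerSeries.X 0 * onVar 1 Bs - MvPowerSeries.X 1 * onVar 0 Bs) =
        (MvPowerSeries.X 0) ^ 2 - (MvPowerSeries.X 1) ^ 2 := by
  set sbar := PowerSeries.map spec2 s
  have hcurve : sbar = _ := hs.map_spec2
  refine ⟨⟨_, ⟨constantCoeff_levelTwoSqrt _ _ _, levelTwoSqrt_sq hcurve⟩,
    fun Bs hBs ↦ eq_levelTwoSqrt hcurve hBs.1 hBs.2⟩, fun Bs h0 h2 ↦ ?_⟩
  obtain rfl := eq_levelTwoSqrt hcurve h0 h2
  have hsbar0 : PowerSeries.constantCoeff sbar = 0 := by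
    rw [← PowerSeries.coeff_zero_eq_constantCoeff_apply, PowerSeries.coeff_map,
      PowerSeries.coeff_zero_eq_constantCoeff_apply, hs0, map_zero]
  refine ⟨coeff_one_levelTwoSqrt _ _ hsbar0, ?_⟩
  have hcurve_on (i : Fin 2) : onVar i sbar = MvPowerSeries.X i ^ 3
      + MvPowerSeries.C (MvPolynomial.X 0) * MvPowerSeries.X i ^ 2 * onVar i sbar
      + MvPowerSeries.C (MvPolynomial.X 1) * MvPowerSeries.X i * onVar i sbar ^ 2 := by
    simpa only [onVar_eq_rename, map_add, map_mul, map_pow, PowerSeries.rename_X,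
      PowerSeries.rename_C] using congrArg (onVar i) hcurve
  have hm' := congrArg (MvPowerSeries.map spec2) hm
  have hk' := congrArg (MvPowerSeries.map spec2) hk
  have hn' := congrArg (MvPowerSeries.map spec2) hn
  have hFT' := congrArg (MvPowerSeries.map spec2) hFT
  simp only [map_mul, map_sub, map_add, map_pow, MvPowerSeries.map_X, ← onVar_map, map_spec2_Wk,
    map_spec2_Qm, map_spec2_Pmk, one_pow, mul_one] at hm' hk' hn' hFT'
  rw [onVar_levelTwoSqrt, onVar_levelTwoSqrt]
  exact levelTwo_formalGroup (by decide) (hcurve_on 0) (hcurve_on 1) hm' hk' hn' hFT'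

end
end
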